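/- arXiv:2211.00836 — 5 statements merged into one kernel-verified Lean document; each statement's English description precedes it below -/
import Mathlib

section
/- Fix constants α > 0, γ > 0, β ≥ 0 and n ≥ 1. Let ξ ∈ ℝⁿ with ξ ≠ 0 and λ₊(ξ) ≠ λ₋(ξ), and let a ∈ ℂ, b ∈ ℂⁿ. Define for t ≥ 0: ρ̂(t) := ((λ₊e^{λ₋t} − λ₋e^{λ₊t})/(λ₊−λ₋))a − iγ((e^{λ₊t} − e^{λ₋t})/(λ₊−λ₋))ξ·b and v̂(t) := e^{−α|ξ|²t}b − iγ((e^{λ₊t} − e^{λ₋t})/(λ₊−λ₋))ξa + (((λ₊e^{λ₊t} − λ₋e^{λ₋t})/(λ₊−λ₋)) − e^{−α|ξ|²t})ξ(ξ·b)/|ξ|². Then ρ̂(0) = a, v̂(0) = b, and for all t > 0: dρ̂/dt(t) + iγ ξ·v̂(t) = 0 and dv̂/dt(t) + α|ξ|²v̂(t) + βξ(ξ·v̂(t)) + iγξρ̂(t) = 0. -/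
open MeasureTheory Filter
open scoped ENNReal Topology

noncomputable section

/-- Fourier transform with the convention `f̂(ξ) = ∫ e^{-i x·ξ} f(x) dx`. -/
def FT {n : ℕ} (f : EuclideanSpace ℝ (Fin n) → ℂ) (ξ : EuclideanSpace ℝ (Fin n)) : ℂ :=
  ∫ x : EuclideanSpace ℝ (Fin n),
    Complex.exp (-Complex.I * Complex.ofReal (∑ k, x k * ξ k)) * f x

/-- The time-dependent function `D_n(t)`. -/
def Dfun (n : ℕ) (t : ℝ) : ℝ :=
  if n = 1 then Real.sqrt t
  else if n = 2 then Real.sqrt (Real.log t)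
  else t ^ ((1 : ℝ)/2 - (n : ℝ)/4)

/-- The root `λ₊` of `λ² + (α+β)r²λ + γ²r² = 0` (principal complex square root). -/
def lamP (α β γ r : ℝ) : ℂ :=
  Complex.ofReal (-((α+β)/2 * r^2))
    + Complex.ofReal ((α+β)/2) * (Complex.ofReal (r^4 - 4*γ^2/(α+β)^2 * r^2)) ^ ((1 : ℂ)/2)

/-- The root `λ₋` of `λ² + (α+β)r²λ + γ²r² = 0` (principal complex square root). -/
def lamM (α β γ r : ℝ) : ℂ :=
  Complex.ofReal (-((α+β)/2 * r^2))
    - Complex.ofReal ((α+β)/2) * (Complex.ofReal (r^4 - 4*γ^2/(α+β)^2 * r^2)) ^ ((1 : ℂ)/2)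

/-- Fourier-space density of the linearized compressible Navier–Stokes system with data (a, b). -/
def rhoHat (α β γ : ℝ) {n : ℕ} (a : ℂ) (b : EuclideanSpace ℂ (Fin n))
    (ξ : EuclideanSpace ℝ (Fin n)) (t : ℝ) : ℂ :=
  ((lamP α β γ ‖ξ‖ * Complex.exp (lamM α β γ ‖ξ‖ * (t : ℂ))
      - lamM α β γ ‖ξ‖ * Complex.exp (lamP α β γ ‖ξ‖ * (t : ℂ)))
    / (lamP α β γ ‖ξ‖ - lamM α β γ ‖ξ‖)) * a
  - Complex.I * (γ : ℂ) * ((Complex.exp (lamP α β γ ‖ξ‖ * (t : ℂ))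
      - Complex.exp (lamM α β γ ‖ξ‖ * (t : ℂ)))
    / (lamP α β γ ‖ξ‖ - lamM α β γ ‖ξ‖)) * (∑ k, (ξ k : ℂ) * b k)

/-- Fourier-space velocity of the linearized compressible Navier–Stokes system with data (a, b). -/
def vHat (α β γ : ℝ) {n : ℕ} (a : ℂ) (b : EuclideanSpace ℂ (Fin n))
    (ξ : EuclideanSpace ℝ (Fin n)) (t : ℝ) : EuclideanSpace ℂ (Fin n) :=
  (WithLp.equiv 2 (Fin n → ℂ)).symm fun j =>
    Complex.exp (Complex.ofReal (-(α * ‖ξ‖^2 * t))) * b j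
    - Complex.I * (γ : ℂ) * ((Complex.exp (lamP α β γ ‖ξ‖ * (t : ℂ))
        - Complex.exp (lamM α β γ ‖ξ‖ * (t : ℂ)))
      / (lamP α β γ ‖ξ‖ - lamM α β γ ‖ξ‖)) * (ξ j : ℂ) * a
    + (((lamP α β γ ‖ξ‖ * Complex.exp (lamP α β γ ‖ξ‖ * (t : ℂ))
          - lamM α β γ ‖ξ‖ * Complex.exp (lamM α β γ ‖ξ‖ * (t : ℂ)))
        / (lamP α β γ ‖ξ‖ - lamM α β γ ‖ξ‖)) - Complex.exp (Complex.ofReal (-(α * ‖ξ‖^2 * t))))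
      * (ξ j : ℂ) * (∑ k, (ξ k : ℂ) * b k) / Complex.ofReal (‖ξ‖^2)

/-- The multiplier `Ĵ₀(t,ξ)` (radial, real-valued), as a function of `r = |ξ|`. -/
def J0hat (α β γ t r : ℝ) : ℝ :=
  r⁻¹ * (Real.cos (γ*r*t) - 1) * Real.exp (-((α+β)/2 * r^2 * t))

/-- The `k`-th component of the multiplier `Ĵ₁(t,ξ)`. -/
def J1hat (α β γ : ℝ) {n : ℕ} (t : ℝ) (ξ : EuclideanSpace ℝ (Fin n)) (k : Fin n) : ℂ :=
  -Complex.I * Complex.ofReal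
    (‖ξ‖⁻¹ * Real.sin (γ*‖ξ‖*t) * Real.exp (-((α+β)/2 * ‖ξ‖^2 * t)) * (ξ k / ‖ξ‖))

/-- The multiplier `Ĵ₂(t,ξ)` (radial, real-valued), as a function of `r = |ξ|`. -/
def J2hat (α β γ t r : ℝ) : ℝ :=
  r⁻¹ * (Real.cos (γ*r*t) * Real.exp (-((α+β)/2 * r^2 * t)) - Real.exp (-(α * r^2 * t)))

/-- Real part of the characteristic roots in the small-frequency regime. -/
def lamR (α β r : ℝ) : ℝ := -((α+β)/2 * r^2)

/-- Imaginary part of the characteristic root `λ₊` in the small-frequency regime. -/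
def lamI (α β γ r : ℝ) : ℝ := r * Real.sqrt (γ^2 - (α+β)^2/4 * r^2)

/-- The multiplier `K̂₀(t,ξ)` (radial, real-valued), as a function of `r = |ξ|`. -/
def K0hat (α β γ t r : ℝ) : ℝ :=
  r⁻¹ * Real.cos (lamI α β γ r * t) * Real.exp (lamR α β r * t)
  - r⁻¹ * Real.exp (-((α+β)/2 * r^2 * t))
  - (lamR α β r / (lamI α β γ r * r)) * Real.sin (lamI α β γ r * t) * Real.exp (lamR α β r * t)

/-- The `k`-th component of the multiplier `K̂₁(t,ξ)`. -/
def K1hat (α β γ : ℝ) {n : ℕ} (t : ℝ) (ξ : EuclideanSpace ℝ (Fin n)) (k : Fin n) : ℂ :=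
  -Complex.I * (γ : ℂ) * Complex.ofReal
    ((Real.sin (lamI α β γ ‖ξ‖ * t) / lamI α β γ ‖ξ‖) * Real.exp (lamR α β ‖ξ‖ * t) * (ξ k / ‖ξ‖))

/-- The multiplier `K̂₂(t,ξ)` (radial, real-valued), as a function of `r = |ξ|`. -/
def K2hat (α β γ t r : ℝ) : ℝ :=
  r⁻¹ * Real.cos (lamI α β γ r * t) * Real.exp (lamR α β r * t)
  - r⁻¹ * Real.exp (-(α * r^2 * t))
  + (lamR α β r / (lamI α β γ r * r)) * Real.sin (lamI α β γ r * t) * Real.exp (lamR α β r * t)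

/-- Weighted `L^{1,s}` norm `∫ (1+|x|)^s |f(x)| dx`. -/
def wnorm {n : ℕ} (s : ℝ) (f : EuclideanSpace ℝ (Fin n) → ℝ) : ℝ :=
  ∫ x : EuclideanSpace ℝ (Fin n), (1 + ‖x‖)^s * |f x|

/-- Zeroth moment `P_f = ∫ f`. -/
def Pint {n : ℕ} (f : EuclideanSpace ℝ (Fin n) → ℝ) : ℝ :=
  ∫ x : EuclideanSpace ℝ (Fin n), f x

/-- `j`-th component of the first moment `Q_f = ∫ x f(x) dx`. -/
def Qmom {n : ℕ} (f : EuclideanSpace ℝ (Fin n) → ℝ) (j : Fin n) : ℝ :=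
  ∫ x : EuclideanSpace ℝ (Fin n), x j * f x

/-!
The roots satisfy `λ₊ + λ₋ = -(α+β)|ξ|²` and `λ₊λ₋ = γ²|ξ|²`. The divided difference
`E(t) = (e^{λ₊t} - e^{λ₋t})/(λ₊ - λ₋)` and `F = E'` therefore obey `F' = (λ₊+λ₋)F - λ₊λ₋E`,
with `E(0) = 0`, `F(0) = 1`. Pairing `v̂` with `ξ` gives `ξ·v̂ = F (ξ·b) - iγ|ξ|² E a`, so
`(ρ̂, ξ·v̂)` solves a closed 2×2 system, while the part of `b` orthogonal to `ξ` just decays like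
`e^{-α|ξ|²t}`; both equations then reduce to polynomial identities in `E`, `F`, `e^{-α|ξ|²t}`.
-/

open Complex

lemma hasDerivAt_cexp_mul_ofReal (c : ℂ) (t : ℝ) :
    HasDerivAt (fun s : ℝ => cexp (c * s)) (c * cexp (c * t)) t := by
  simpa [mul_comm] using (((hasDerivAt_id (t : ℂ)).const_mul c).cexp).comp_ofReal

section ExpDivDiff

variable (p q : ℂ)

def expDivDiff (t : ℝ) : ℂ := (cexp (p * t) - cexp (q * t)) / (p - q)

def expDivDiffDeriv (t : ℝ) : ℂ := (p * cexp (p * t) - q * cexp (q * t)) / (p - q)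

lemma hasDerivAt_expDivDiff (t : ℝ) :
    HasDerivAt (expDivDiff p q) (expDivDiffDeriv p q t) t :=
  ((hasDerivAt_cexp_mul_ofReal p t).sub (hasDerivAt_cexp_mul_ofReal q t)).div_const _

lemma hasDerivAt_expDivDiffDeriv (t : ℝ) :
    HasDerivAt (expDivDiffDeriv p q)
      ((p + q) * expDivDiffDeriv p q t - p * q * expDivDiff p q t) t := by
  refine ((((hasDerivAt_cexp_mul_ofReal p t).const_mul p).sub
    ((hasDerivAt_cexp_mul_ofReal q t).const_mul q)).div_const (p - q)).congr_deriv ?_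
  simp only [expDivDiff, expDivDiffDeriv]
  ring

lemma expDivDiff_zero : expDivDiff p q 0 = 0 := by
  simp [expDivDiff]

variable {p q}

lemma expDivDiffDeriv_zero (h : p ≠ q) : expDivDiffDeriv p q 0 = 1 := by
  simp [expDivDiffDeriv, sub_ne_zero.mpr h]

end ExpDivDiff

section CharacteristicRoots

variable (α β γ r : ℝ)

lemma lamP_add_lamM : lamP α β γ r + lamM α β γ r = -((α + β) * r ^ 2 : ℝ) := by
  simp only [lamP, lamM]
  push_cast
  ring

lemma lamP_mul_lamM (h : α + β ≠ 0) : lamP α β γ r * lamM α β γ r = (γ ^ 2 * r ^ 2 : ℝ) := by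
  have hroot := cpow_ofNat_inv_pow ((r ^ 4 - 4 * γ ^ 2 / (α + β) ^ 2 * r ^ 2 : ℝ) : ℂ) 2
  simp only [lamP, lamM, one_div]
  push_cast at hroot ⊢
  have hinv : ((α + β : ℂ) ^ 2) * ((α + β : ℂ) ^ 2)⁻¹ = 1 :=
    mul_inv_cancel₀ (by exact_mod_cast pow_ne_zero 2 h)
  linear_combination (-((α + β : ℂ) / 2) ^ 2) * hroot + (γ ^ 2 * r ^ 2 : ℂ) * hinv

end CharacteristicRoots

lemma sum_ofReal_mul_self {ι : Type*} [Fintype ι] (ξ : EuclideanSpace ℝ ι) :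
    ∑ k, (ξ k : ℂ) * (ξ k : ℂ) = (‖ξ‖ ^ 2 : ℝ) := by
  rw [EuclideanSpace.real_norm_sq_eq]
  push_cast
  simp only [sq]

section FourierSolution

variable (α β γ : ℝ) {n : ℕ} (a : ℂ) (b : EuclideanSpace ℂ (Fin n)) (ξ : EuclideanSpace ℝ (Fin n))

lemma rhoHat_eq_expDivDiff : rhoHat α β γ a b ξ = fun t =>
    (expDivDiffDeriv (lamP α β γ ‖ξ‖) (lamM α β γ ‖ξ‖) t
        - (lamP α β γ ‖ξ‖ + lamM α β γ ‖ξ‖) * expDivDiff (lamP α β γ ‖ξ‖) (lamM α β γ ‖ξ‖) t) * a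
      - I * γ * expDivDiff (lamP α β γ ‖ξ‖) (lamM α β γ ‖ξ‖) t * ∑ k, (ξ k : ℂ) * b k := by
  funext t
  simp only [rhoHat, expDivDiff, expDivDiffDeriv]
  ring

lemma vHat_apply_eq_expDivDiff (t : ℝ) (j : Fin n) : vHat α β γ a b ξ t j =
    cexp ((-(α * ‖ξ‖ ^ 2) : ℝ) * t) * b j
      - I * γ * expDivDiff (lamP α β γ ‖ξ‖) (lamM α β γ ‖ξ‖) t * ξ j * a
      + (expDivDiffDeriv (lamP α β γ ‖ξ‖) (lamM α β γ ‖ξ‖) t - cexp ((-(α * ‖ξ‖ ^ 2) : ℝ) * t))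
        * ξ j * (∑ k, (ξ k : ℂ) * b k) / (‖ξ‖ ^ 2 : ℝ) := by
  simp only [vHat, expDivDiff, expDivDiffDeriv, WithLp.equiv_symm_apply, PiLp.toLp_apply]
  push_cast
  rw [neg_mul]

lemma sum_mul_vHat (hξ : ξ ≠ 0) (t : ℝ) : ∑ k, (ξ k : ℂ) * vHat α β γ a b ξ t k =
    expDivDiffDeriv (lamP α β γ ‖ξ‖) (lamM α β γ ‖ξ‖) t * ∑ k, (ξ k : ℂ) * b k
      - I * γ * (‖ξ‖ ^ 2 : ℝ) * expDivDiff (lamP α β γ ‖ξ‖) (lamM α β γ ‖ξ‖) t * a := by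
  have hR : ((‖ξ‖ ^ 2 : ℝ) : ℂ) ≠ 0 := by exact_mod_cast pow_ne_zero 2 (norm_ne_zero_iff.mpr hξ)
  set E := expDivDiff (lamP α β γ ‖ξ‖) (lamM α β γ ‖ξ‖) t
  set F := expDivDiffDeriv (lamP α β γ ‖ξ‖) (lamM α β γ ‖ξ‖) t
  set e := cexp ((-(α * ‖ξ‖ ^ 2) : ℝ) * t)
  set S := ∑ k, (ξ k : ℂ) * b k
  have hsplit : ∀ k, (ξ k : ℂ) * vHat α β γ a b ξ t k
      = e * ((ξ k : ℂ) * b k) + ((F - e) * S / (‖ξ‖ ^ 2 : ℝ) - I * γ * E * a) * (ξ k * ξ k) := by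
    intro k
    rw [vHat_apply_eq_expDivDiff]
    ring
  simp only [hsplit, Finset.sum_add_distrib, ← Finset.mul_sum, sum_ofReal_mul_self]
  field_simp
  ring

variable {α β γ} {ξ}

lemma rhoHat_zero (hlam : lamP α β γ ‖ξ‖ ≠ lamM α β γ ‖ξ‖) : rhoHat α β γ a b ξ 0 = a := by
  simp [rhoHat_eq_expDivDiff, expDivDiff_zero, expDivDiffDeriv_zero hlam]

lemma vHat_zero (hlam : lamP α β γ ‖ξ‖ ≠ lamM α β γ ‖ξ‖) : vHat α β γ a b ξ 0 = b := by
  ext j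
  simp [vHat_apply_eq_expDivDiff, expDivDiff_zero, expDivDiffDeriv_zero hlam]

variable (γ)

lemma hasDerivAt_rhoHat (hab : α + β ≠ 0) (hξ : ξ ≠ 0) (t : ℝ) :
    HasDerivAt (fun s => rhoHat α β γ a b ξ s)
      (-(I * γ * ∑ k, (ξ k : ℂ) * vHat α β γ a b ξ t k)) t := by
  have hE := hasDerivAt_expDivDiff (lamP α β γ ‖ξ‖) (lamM α β γ ‖ξ‖) t
  have hF := hasDerivAt_expDivDiffDeriv (lamP α β γ ‖ξ‖) (lamM α β γ ‖ξ‖) t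
  have hprod := lamP_mul_lamM α β γ ‖ξ‖ hab
  rw [sum_mul_vHat α β γ a b ξ hξ, rhoHat_eq_expDivDiff]
  refine (((hF.sub (hE.const_mul _)).mul_const a).sub
    ((hE.const_mul (I * γ)).mul_const _)).congr_deriv ?_
  push_cast at hprod ⊢
  linear_combination (-(expDivDiff (lamP α β γ ‖ξ‖) (lamM α β γ ‖ξ‖) t * a)) * hprod
    + (-(γ ^ 2 * ‖ξ‖ ^ 2 * expDivDiff (lamP α β γ ‖ξ‖) (lamM α β γ ‖ξ‖) t * a)) * I_mul_I

lemma hasDerivAt_vHat_apply (hab : α + β ≠ 0) (hξ : ξ ≠ 0) (t : ℝ) (j : Fin n) :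
    HasDerivAt (fun s => vHat α β γ a b ξ s j)
      (-(((α * ‖ξ‖ ^ 2 : ℝ) : ℂ) * vHat α β γ a b ξ t j
        + β * ξ j * ∑ k, (ξ k : ℂ) * vHat α β γ a b ξ t k
        + I * γ * ξ j * rhoHat α β γ a b ξ t)) t := by
  set P := lamP α β γ ‖ξ‖
  set M := lamM α β γ ‖ξ‖
  have hE := hasDerivAt_expDivDiff P M t
  have hF := hasDerivAt_expDivDiffDeriv P M t
  have he := hasDerivAt_cexp_mul_ofReal ((-(α * ‖ξ‖ ^ 2) : ℝ) : ℂ) t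
  have hsum := lamP_add_lamM α β γ ‖ξ‖
  have hprod := lamP_mul_lamM α β γ ‖ξ‖ hab
  have hRinv : ((‖ξ‖ : ℂ) ^ 2) * ((‖ξ‖ : ℂ) ^ 2)⁻¹ = 1 :=
    mul_inv_cancel₀ (by exact_mod_cast pow_ne_zero 2 (norm_ne_zero_iff.mpr hξ))
  rw [sum_mul_vHat α β γ a b ξ hξ]
  simp only [vHat_apply_eq_expDivDiff, rhoHat_eq_expDivDiff]
  refine (((he.mul_const _).sub (((hE.const_mul _).mul_const _).mul_const _)).add
    ((((hF.sub he).mul_const _).mul_const _).div_const _)).congr_deriv ?_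
  push_cast at hsum hprod ⊢
  linear_combination
    (-(I * γ * ξ j * a * expDivDiff P M t)
        + expDivDiffDeriv P M t * ξ j * (∑ k, (ξ k : ℂ) * b k) * ((‖ξ‖ : ℂ) ^ 2)⁻¹) * hsum
      - expDivDiff P M t * ξ j * (∑ k, (ξ k : ℂ) * b k) * ((‖ξ‖ : ℂ) ^ 2)⁻¹ * hprod
      - (β * expDivDiffDeriv P M t + γ ^ 2 * expDivDiff P M t) * ξ j * (∑ k, (ξ k : ℂ) * b k)
        * hRinv
      - γ ^ 2 * ξ j * expDivDiff P M t * (∑ k, (ξ k : ℂ) * b k) * I_mul_I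

end FourierSolution

theorem fourier_solution_solves_system_general
    (α β γ : ℝ) (hα : 0 < α) (hβ : 0 ≤ β)
    {n : ℕ} (ξ : EuclideanSpace ℝ (Fin n)) (hξ : ξ ≠ 0)
    (hlam : lamP α β γ ‖ξ‖ ≠ lamM α β γ ‖ξ‖)
    (a : ℂ) (b : EuclideanSpace ℂ (Fin n)) :
    rhoHat α β γ a b ξ 0 = a ∧ vHat α β γ a b ξ 0 = b
    ∧ (∀ t : ℝ, 0 < t → HasDerivAt (fun s => rhoHat α β γ a b ξ s)
        (-(Complex.I * (γ : ℂ) * ∑ k, (ξ k : ℂ) * vHat α β γ a b ξ t k)) t)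
    ∧ (∀ t : ℝ, 0 < t → ∀ j, HasDerivAt (fun s => vHat α β γ a b ξ s j)
        (-(Complex.ofReal (α * ‖ξ‖^2) * vHat α β γ a b ξ t j
           + (β : ℂ) * (ξ j : ℂ) * ∑ k, (ξ k : ℂ) * vHat α β γ a b ξ t k
           + Complex.I * (γ : ℂ) * (ξ j : ℂ) * rhoHat α β γ a b ξ t)) t) := by
  have hab : α + β ≠ 0 := by positivity
  exact ⟨rhoHat_zero a b hlam, vHat_zero a b hlam,
    fun t _ => hasDerivAt_rhoHat γ a b hab hξ t,
    fun t _ j => hasDerivAt_vHat_apply γ a b hab hξ t j⟩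

/-- The Fourier-space formulas solve the Fourier-transformed linearized
compressible Navier–Stokes ODE system with initial data `(a, b)`. -/
theorem fourier_solution_solves_system
    (α β γ : ℝ) (hα : 0 < α) (hβ : 0 ≤ β) (hγ : 0 < γ)
    {n : ℕ} (hn : 1 ≤ n) (ξ : EuclideanSpace ℝ (Fin n)) (hξ : ξ ≠ 0)
    (hlam : lamP α β γ ‖ξ‖ ≠ lamM α β γ ‖ξ‖)
    (a : ℂ) (b : EuclideanSpace ℂ (Fin n)) :
    rhoHat α β γ a b ξ 0 = a ∧ vHat α β γ a b ξ 0 = b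
    ∧ (∀ t : ℝ, 0 < t → HasDerivAt (fun s => rhoHat α β γ a b ξ s)
        (-(Complex.I * (γ : ℂ) * ∑ k, (ξ k : ℂ) * vHat α β γ a b ξ t k)) t)
    ∧ (∀ t : ℝ, 0 < t → ∀ j, HasDerivAt (fun s => vHat α β γ a b ξ s j)
        (-(Complex.ofReal (α * ‖ξ‖^2) * vHat α β γ a b ξ t j
           + (β : ℂ) * (ξ j : ℂ) * ∑ k, (ξ k : ℂ) * vHat α β γ a b ξ t k
           + Complex.I * (γ : ℂ) * (ξ j : ℂ) * rhoHat α β γ a b ξ t)) t) :=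
  fourier_solution_solves_system_general α β γ hα hβ ξ hξ hlam a b

end
end

section
/- Fix constants α > 0, γ > 0, β ≥ 0. There exist ε₀ ∈ (0, min(1, 2γ/(α+β))), c > 0 and C > 0 such that for all ξ ∈ ℝⁿ with 0 < |ξ| ≤ ε₀ and all t ≥ 1: |K̂₀(t,ξ) − Ĵ₀(t,ξ)| ≤ C e^{−c|ξ|²t}. -/
open MeasureTheory Filter
open scoped ENNReal Topology

noncomputable section

/-! For `|ξ| = r` small the two multipliers share the damping factor `e^{λ_R t} = e^{-(α+β)r²t/2}`,
so their difference is that factor times a bracket. Since `λ_I = r √(γ² - (α+β)²r²/4)` and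
`γ - √(γ² - d) ≤ d/γ`, the cosine terms differ by at most `(α+β)²r³t/(4γ)`, and the sine term has
coefficient `|λ_R|/(λ_I r) = (α+β)/(2√(γ² - (α+β)²r²/4)) ≤ (α+β)/γ`. The bracket is therefore
`O(1 + r²t)`, and half of the damping absorbs the factor `r²t`. -/

open Real

lemma add_one_mul_exp_neg_two_mul_le (x : ℝ) : (x + 1) * exp (-(2 * x)) ≤ exp (-x) := by
  have h : (x + 1) * exp (-x) ≤ 1 := by
    rw [← le_div_iff₀ (exp_pos _), exp_neg, div_inv_eq_mul, one_mul]
    exact add_one_le_exp x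
  calc (x + 1) * exp (-(2 * x)) = (x + 1) * exp (-x) * exp (-x) := by
        rw [mul_assoc, ← exp_add]; ring_nf
    _ ≤ 1 * exp (-x) := by gcongr
    _ = exp (-x) := one_mul _

lemma abs_sub_sqrt_sq_sub_le {a d : ℝ} (ha : 0 < a) (hd : 0 ≤ d) :
    |a - √(a ^ 2 - d)| ≤ d / a := by
  have hw : √(a ^ 2 - d) ≤ a := by
    rw [sqrt_le_left ha.le]; linarith
  rw [abs_of_nonneg (by linarith), le_div_iff₀ ha]
  rcases le_or_gt d (a ^ 2) with hda | hda
  · have hsq := sq_sqrt (sub_nonneg.2 hda)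
    nlinarith [sqrt_nonneg (a ^ 2 - d)]
  · rw [sqrt_eq_zero'.2 (by linarith)]; nlinarith

lemma half_le_sqrt_sq_sub {a d : ℝ} (hd : d ≤ 3 / 4 * a ^ 2) :
    a / 2 ≤ √(a ^ 2 - d) :=
  le_sqrt_of_sq_le (by linarith)

section SmallFrequency

variable {α β γ t r : ℝ}

lemma lamR_def : lamR α β r = -((α + β) / 2 * r ^ 2) := rfl

lemma lamI_def : lamI α β γ r = r * √(γ ^ 2 - (α + β) ^ 2 / 4 * r ^ 2) := rfl

lemma K0hat_sub_J0hat :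
    K0hat α β γ t r - J0hat α β γ t r =
      (r⁻¹ * (cos (lamI α β γ r * t) - cos (γ * r * t))
        - lamR α β r / (lamI α β γ r * r) * sin (lamI α β γ r * t)) * exp (lamR α β r * t) := by
  rw [K0hat, J0hat, lamR_def]; ring_nf

lemma abs_inv_mul_cos_lamI_sub_cos_le (hγ : 0 < γ) (hr : 0 < r) (ht : 0 ≤ t) :
    |r⁻¹ * (cos (lamI α β γ r * t) - cos (γ * r * t))| ≤ (α + β) ^ 2 / (4 * γ) * r ^ 2 * t := by
  have hγw := abs_sub_sqrt_sq_sub_le hγ (d := (α + β) ^ 2 / 4 * r ^ 2) (by positivity)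
  rw [abs_mul, abs_inv, abs_of_pos hr, inv_mul_le_iff₀ hr]
  calc |cos (lamI α β γ r * t) - cos (γ * r * t)|
      ≤ |lamI α β γ r * t - γ * r * t| := abs_cos_sub_cos_le _ _
    _ = r * t * |γ - √(γ ^ 2 - (α + β) ^ 2 / 4 * r ^ 2)| := by
        rw [lamI_def, ← abs_of_nonneg (mul_nonneg hr.le ht), ← abs_mul, ← abs_neg]; ring_nf
    _ ≤ r * t * ((α + β) ^ 2 / 4 * r ^ 2 / γ) := by gcongr
    _ = r * ((α + β) ^ 2 / (4 * γ) * r ^ 2 * t) := by field_simp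

lemma abs_lamR_div_mul_sin_le (hs : 0 ≤ α + β) (hγ : 0 < γ) (hr : 0 < r) (hrγ : (α + β) * r ≤ γ) :
    |lamR α β r / (lamI α β γ r * r) * sin (lamI α β γ r * t)| ≤ (α + β) / γ := by
  have hw : γ / 2 ≤ √(γ ^ 2 - (α + β) ^ 2 / 4 * r ^ 2) :=
    half_le_sqrt_sq_sub (by nlinarith [mul_nonneg hs hr.le])
  have hw0 : 0 < √(γ ^ 2 - (α + β) ^ 2 / 4 * r ^ 2) := by linarith
  calc |lamR α β r / (lamI α β γ r * r) * sin (lamI α β γ r * t)|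
      ≤ |lamR α β r / (lamI α β γ r * r)| * 1 := by
        rw [abs_mul]; gcongr; exact abs_sin_le_one _
    _ = (α + β) / (2 * √(γ ^ 2 - (α + β) ^ 2 / 4 * r ^ 2)) := by
        rw [lamR_def, lamI_def, abs_div, abs_neg, abs_of_nonneg (by positivity),
          abs_of_nonneg (by positivity)]
        field_simp
    _ ≤ (α + β) / γ := by gcongr; linarith

theorem abs_K0hat_sub_J0hat_le (hs : 0 ≤ α + β) (hγ : 0 < γ) (hr : 0 < r)
    (hrγ : (α + β) * r ≤ γ) (ht : 0 ≤ t) :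
    |K0hat α β γ t r - J0hat α β γ t r| ≤ (α + β) / γ * exp (-((α + β) / 4 * r ^ 2 * t)) := by
  set x := (α + β) / 4 * r ^ 2 * t
  have hdamp : exp (lamR α β r * t) = exp (-(2 * x)) := by rw [lamR_def]; congr 1; ring
  have hbracket := (abs_sub _ _).trans <| add_le_add
    (abs_inv_mul_cos_lamI_sub_cos_le (α := α) (β := β) hγ hr ht)
    (abs_lamR_div_mul_sin_le (t := t) hs hγ hr hrγ)
  rw [K0hat_sub_J0hat, abs_mul, abs_of_pos (exp_pos _), hdamp]
  calc _ ≤ ((α + β) ^ 2 / (4 * γ) * r ^ 2 * t + (α + β) / γ) * exp (-(2 * x)) := by gcongr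
    _ = (α + β) / γ * ((x + 1) * exp (-(2 * x))) := by field_simp; ring
    _ ≤ (α + β) / γ * exp (-x) := by gcongr; exact add_one_mul_exp_neg_two_mul_le x

end SmallFrequency

/-- For small frequencies, the kernel `K̂₀` is approximated by the profile
`Ĵ₀` up to an exponentially decaying error `C e^{-c|ξ|²t}`. -/
theorem K0_approx_J0
    (α β γ : ℝ) (hα : 0 < α) (hβ : 0 ≤ β) (hγ : 0 < γ) {n : ℕ} :
    ∃ ε₀ c C : ℝ, 0 < ε₀ ∧ ε₀ < min 1 (2*γ/(α+β)) ∧ 0 < c ∧ 0 < C ∧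
      ∀ ξ : EuclideanSpace ℝ (Fin n), 0 < ‖ξ‖ → ‖ξ‖ ≤ ε₀ → ∀ t : ℝ, 1 ≤ t →
        |K0hat α β γ t ‖ξ‖ - J0hat α β γ t ‖ξ‖| ≤ C * Real.exp (-(c * ‖ξ‖^2 * t)) := by
  have hs : 0 < α + β := by positivity
  have hm : 0 < min 1 (2 * γ / (α + β)) := lt_min one_pos (by positivity)
  refine ⟨min 1 (2 * γ / (α + β)) / 2, (α + β) / 4, (α + β) / γ, by positivity, by linarith,
    by positivity, by positivity, fun ξ hξ hξε t ht => ?_⟩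
  have hrγ : (α + β) * ‖ξ‖ ≤ γ := by
    have : ‖ξ‖ ≤ γ / (α + β) := hξε.trans <| by
      rw [div_le_iff₀ two_pos, div_mul_eq_mul_div, mul_comm]; exact min_le_right _ _
    rwa [le_div_iff₀ hs, mul_comm] at this
  exact abs_K0hat_sub_J0hat_le hs.le hγ hξ hrγ (by linarith)

end
end

section
/- Fix constants α > 0, γ > 0, β ≥ 0. There exist ε₀ ∈ (0, min(1, 2γ/(α+β))), c > 0 and C > 0 such that for all ξ ∈ ℝⁿ with 0 < |ξ| ≤ ε₀ and all t ≥ 1: |K̂₁(t,ξ) − Ĵ₁(t,ξ)| + |K̂₂(t,ξ) − Ĵ₂(t,ξ)| ≤ C e^{−c|ξ|²t}. -/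
open MeasureTheory Filter
open scoped ENNReal Topology

noncomputable section

/-!
Write `s = √(γ² - (α+β)²|ξ|²/4)`, so that `λ_I = |ξ| s` and `0 ≤ γ - s ≤ (α+β)²|ξ|²/(4γ)`.
The terms `e^{-α|ξ|²t}` of `K̂₂` and `Ĵ₂` cancel, and replacing the frequency `λ_I` by `γ|ξ|` in
the oscillating factors costs, by the Lipschitz bounds for `sin` and `cos`, an error `O(|ξ|² t)`;
what remains of `K̂₂` carries the bounded factor `λ_R / (λ_I |ξ|) = -(α+β)/(2s)`. Everything is
multiplied by `e^{λ_R t} = e^{-(α+β)|ξ|²t/2}`, and half of this decay absorbs the factor `|ξ|² t`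
because `x e^{-a x} ≤ 1/a`.
-/

open Real

lemma abs_mul_sin_div_sub_sin_le {γ s : ℝ} (hs : 0 < s) (x : ℝ) :
    |γ * sin (s * x) / s - sin (γ * x)| ≤ 2 * |γ| * |γ - s| * |x| / s := by
  have hsplit : γ * sin (s * x) / s - sin (γ * x)
      = γ / s * (sin (s * x) - sin (γ * x)) + (γ - s) / s * sin (γ * x) := by
    field_simp; ring
  have hdiff : |sin (s * x) - sin (γ * x)| ≤ |γ - s| * |x| := by
    calc _ ≤ |s * x - γ * x| := abs_sin_sub_sin_le _ _
      _ = |γ - s| * |x| := by rw [← abs_mul, ← abs_neg]; ring_nf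
  have hsin : |sin (γ * x)| ≤ |γ| * |x| := abs_sin_le_abs.trans (abs_mul _ _).le
  calc _ ≤ |γ / s| * |sin (s * x) - sin (γ * x)| + |(γ - s) / s| * |sin (γ * x)| := by
        rw [hsplit, ← abs_mul, ← abs_mul]; exact abs_add_le _ _
    _ ≤ |γ| / s * (|γ - s| * |x|) + |γ - s| / s * (|γ| * |x|) := by
        rw [abs_div, abs_div, abs_of_pos hs]; gcongr
    _ = _ := by ring

lemma mul_exp_neg_mul_le_inv {a : ℝ} (ha : 0 < a) (x : ℝ) : x * exp (-(a * x)) ≤ a⁻¹ := by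
  rw [exp_neg, ← div_eq_mul_inv, div_le_iff₀ (exp_pos _), ← div_eq_inv_mul,
    le_div_iff₀' ha]
  linarith [add_one_le_exp (a * x)]

lemma mul_add_mul_exp_neg_two_mul_le {a p q x : ℝ} (ha : 0 < a) (hp : 0 ≤ p) (hq : 0 ≤ q)
    (hx : 0 ≤ x) : (p * x + q) * exp (-(2 * a * x)) ≤ (p / a + q) * exp (-(a * x)) := by
  have hsq : exp (-(2 * a * x)) = exp (-(a * x)) * exp (-(a * x)) := by
    rw [← exp_add]; ring_nf
  have he1 : exp (-(a * x)) ≤ 1 := exp_le_one_iff.mpr (by nlinarith)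
  have hxe := mul_exp_neg_mul_le_inv ha x
  have he0 := (exp_pos (-(a * x))).le
  rw [hsq, div_eq_mul_inv]
  nlinarith [mul_le_mul_of_nonneg_left hxe (mul_nonneg hp he0),
    mul_le_mul_of_nonneg_left he1 (mul_nonneg hq he0)]

lemma half_le_sqrt_sq_sub_s16 {A γ r : ℝ} (hγ : 0 < γ) (h : |A * r| ≤ γ) :
    γ / 2 ≤ √(γ ^ 2 - A ^ 2 / 4 * r ^ 2) := by
  apply le_sqrt_of_sq_le
  nlinarith [sq_abs (A * r), abs_nonneg (A * r)]

lemma abs_sub_sqrt_sq_sub_le_s16 {A γ r : ℝ} (hγ : 0 < γ) :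
    |γ - √(γ ^ 2 - A ^ 2 / 4 * r ^ 2)| ≤ A ^ 2 * r ^ 2 / (4 * γ) := by
  set s := √(γ ^ 2 - A ^ 2 / 4 * r ^ 2)
  have hs0 : 0 ≤ s := sqrt_nonneg _
  have hsγ : s ≤ γ := sqrt_le_iff.mpr ⟨hγ.le, by nlinarith [sq_nonneg (A * r)]⟩
  have hs2 : γ ^ 2 - A ^ 2 / 4 * r ^ 2 ≤ s ^ 2 := sq_sqrt' ▸ le_max_left _ _
  rw [abs_of_nonneg (sub_nonneg.mpr hsγ), le_div_iff₀ (by positivity)]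
  nlinarith [mul_nonneg hs0 (sub_nonneg.mpr hsγ)]

lemma lamR_mul (α β r t : ℝ) : lamR α β r * t = -((α + β) / 2 * r ^ 2 * t) := by
  rw [lamR]; ring

lemma lamI_eq_mul_sqrt (α β γ r : ℝ) :
    lamI α β γ r = r * √(γ ^ 2 - (α + β) ^ 2 / 4 * r ^ 2) := rfl

lemma K2hat_sub_J2hat (α β γ t : ℝ) {r : ℝ} (hr : r ≠ 0) :
    K2hat α β γ t r - J2hat α β γ t r
      = ((cos (lamI α β γ r * t) - cos (γ * r * t)) / r
          - (α + β) * r / (2 * lamI α β γ r) * sin (lamI α β γ r * t))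
        * exp (-((α + β) / 2 * r ^ 2 * t)) := by
  rw [K2hat, J2hat, lamR_mul, lamR]
  field_simp
  ring

lemma K1hat_sub_J1hat (α β γ t : ℝ) {n : ℕ} (ξ : EuclideanSpace ℝ (Fin n)) (k : Fin n) :
    K1hat α β γ t ξ k - J1hat α β γ t ξ k
      = -Complex.I * (((γ * sin (lamI α β γ ‖ξ‖ * t) / lamI α β γ ‖ξ‖
            - sin (γ * ‖ξ‖ * t) / ‖ξ‖) * exp (-((α + β) / 2 * ‖ξ‖ ^ 2 * t)) / ‖ξ‖ : ℝ) : ℂ)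
        * (ξ k : ℂ) := by
  rw [K1hat, J1hat, lamR_mul]
  push_cast
  ring

lemma norm_equiv_symm_mul_ofReal (c : ℂ) {n : ℕ} (ξ : EuclideanSpace ℝ (Fin n)) :
    ‖(WithLp.equiv 2 (Fin n → ℂ)).symm fun k => c * (ξ k : ℂ)‖ = ‖c‖ * ‖ξ‖ := by
  simp only [EuclideanSpace.norm_eq, WithLp.equiv_symm_apply, norm_mul,
    Complex.norm_real, mul_pow, ← Finset.mul_sum]
  rw [sqrt_mul (sq_nonneg _), sqrt_sq (norm_nonneg _)]

lemma norm_K1hat_sub_J1hat (α β γ t : ℝ) {n : ℕ} {ξ : EuclideanSpace ℝ (Fin n)} (hξ : ξ ≠ 0) :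
    ‖(WithLp.equiv 2 (Fin n → ℂ)).symm fun k => K1hat α β γ t ξ k - J1hat α β γ t ξ k‖
      = |γ * sin (lamI α β γ ‖ξ‖ * t) / lamI α β γ ‖ξ‖ - sin (γ * ‖ξ‖ * t) / ‖ξ‖|
          * exp (-((α + β) / 2 * ‖ξ‖ ^ 2 * t)) := by
  simp_rw [K1hat_sub_J1hat]
  rw [norm_equiv_symm_mul_ofReal, norm_mul, norm_neg, Complex.norm_I, one_mul,
    Complex.norm_real, Real.norm_eq_abs, abs_div, abs_mul, abs_norm, abs_of_pos (exp_pos _),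
    div_mul_cancel₀ _ (norm_ne_zero_iff.mpr hξ)]

section SmallFrequency

variable {α β γ t : ℝ}

lemma abs_K2hat_sub_J2hat_le (hA : 0 ≤ α + β) (hγ : 0 < γ) (ht : 0 ≤ t) {r : ℝ} (hr : 0 < r)
    (hrγ : (α + β) * r ≤ γ) :
    |K2hat α β γ t r - J2hat α β γ t r|
      ≤ ((α + β) ^ 2 * r ^ 2 * t / (4 * γ) + (α + β) / γ)
        * exp (-((α + β) / 2 * r ^ 2 * t)) := by
  set s := √(γ ^ 2 - (α + β) ^ 2 / 4 * r ^ 2)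
  have hs : γ / 2 ≤ s := half_le_sqrt_sq_sub_s16 hγ (by rwa [abs_of_nonneg (by positivity)])
  have hs0 : 0 < s := by linarith
  have hcos : |cos (lamI α β γ r * t) - cos (γ * r * t)| / r
      ≤ (α + β) ^ 2 * r ^ 2 * t / (4 * γ) := by
    calc _ ≤ |r * s * t - γ * r * t| / r :=
          div_le_div_of_nonneg_right (abs_cos_sub_cos_le _ _) hr.le
      _ = |γ - s| * t := by
          rw [show r * s * t - γ * r * t = -((γ - s) * (r * t)) by ring, abs_neg, abs_mul,
            abs_of_nonneg (by positivity : 0 ≤ r * t)]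
          field_simp
      _ ≤ _ := by
          rw [mul_div_right_comm]; gcongr; exact abs_sub_sqrt_sq_sub_le_s16 hγ
  have hsin : |(α + β) * r / (2 * lamI α β γ r) * sin (lamI α β γ r * t)| ≤ (α + β) / γ := by
    rw [lamI_eq_mul_sqrt, abs_mul,
      show (α + β) * r / (2 * (r * s)) = (α + β) / (2 * s) by field_simp]
    calc _ ≤ |(α + β) / (2 * s)| * 1 := by gcongr; exact abs_sin_le_one _
      _ = (α + β) / (2 * s) := by rw [mul_one, abs_of_nonneg (by positivity)]
      _ ≤ (α + β) / (2 * (γ / 2)) := by gcongr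
      _ = (α + β) / γ := by ring_nf
  rw [K2hat_sub_J2hat α β γ t hr.ne', abs_mul, abs_of_pos (exp_pos _)]
  gcongr
  refine (abs_sub _ _).trans ?_
  rw [abs_div, abs_of_pos hr]
  exact add_le_add hcos hsin

lemma norm_K1hat_sub_J1hat_le (hA : 0 ≤ α + β) (hγ : 0 < γ) (ht : 0 ≤ t) {n : ℕ}
    {ξ : EuclideanSpace ℝ (Fin n)} (hξ : 0 < ‖ξ‖) (hξγ : (α + β) * ‖ξ‖ ≤ γ) :
    ‖(WithLp.equiv 2 (Fin n → ℂ)).symm fun k => K1hat α β γ t ξ k - J1hat α β γ t ξ k‖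
      ≤ (α + β) ^ 2 * ‖ξ‖ ^ 2 * t / γ * exp (-((α + β) / 2 * ‖ξ‖ ^ 2 * t)) := by
  rw [norm_K1hat_sub_J1hat α β γ t (norm_pos_iff.mp hξ)]
  gcongr
  set r := ‖ξ‖
  set s := √(γ ^ 2 - (α + β) ^ 2 / 4 * r ^ 2)
  have hs : γ / 2 ≤ s := half_le_sqrt_sq_sub_s16 hγ (by rwa [abs_of_nonneg (by positivity)])
  have hs0 : 0 < s := by linarith
  rw [lamI_eq_mul_sqrt,
    show γ * sin (r * s * t) / (r * s) - sin (γ * r * t) / r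
      = (γ * sin (s * (r * t)) / s - sin (γ * (r * t))) / r by field_simp,
    abs_div, abs_of_pos hξ, div_le_iff₀ hξ]
  calc _ ≤ 2 * |γ| * |γ - s| * |r * t| / s := abs_mul_sin_div_sub_sin_le hs0 _
    _ ≤ 2 * γ * ((α + β) ^ 2 * r ^ 2 / (4 * γ)) * (r * t) / (γ / 2) := by
        rw [abs_of_pos hγ, abs_of_nonneg (by positivity : 0 ≤ r * t)]
        gcongr
        exact abs_sub_sqrt_sq_sub_le_s16 hγ
    _ = _ := by field_simp; ring

end SmallFrequency

/-- For small frequencies, the kernels `K̂₁, K̂₂` are approximated by the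
profiles `Ĵ₁, Ĵ₂` up to an exponentially decaying error `C e^{-c|ξ|²t}`. -/
theorem K1_K2_approx_J1_J2
    (α β γ : ℝ) (hα : 0 < α) (hβ : 0 ≤ β) (hγ : 0 < γ) {n : ℕ} :
    ∃ ε₀ c C : ℝ, 0 < ε₀ ∧ ε₀ < min 1 (2*γ/(α+β)) ∧ 0 < c ∧ 0 < C ∧
      ∀ ξ : EuclideanSpace ℝ (Fin n), 0 < ‖ξ‖ → ‖ξ‖ ≤ ε₀ → ∀ t : ℝ, 1 ≤ t →
        ‖(WithLp.equiv 2 (Fin n → ℂ)).symm fun k =>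
            K1hat α β γ t ξ k - J1hat α β γ t ξ k‖
          + |K2hat α β γ t ‖ξ‖ - J2hat α β γ t ‖ξ‖|
        ≤ C * Real.exp (-(c * ‖ξ‖^2 * t)) := by
  have hA : 0 < α + β := by linarith
  refine ⟨min (1/2) (γ/(α+β)), (α+β)/4, 6*(α+β)/γ, by positivity, ?_, by positivity,
    by positivity, fun ξ hξ hξε t ht => ?_⟩
  · refine lt_min (by linarith [min_le_left (1/2) (γ/(α+β))]) ((min_le_right _ _).trans_lt ?_)
    gcongr
    linarith
  have hξγ : (α + β) * ‖ξ‖ ≤ γ := (le_div_iff₀' hA).mp (hξε.trans (min_le_right _ _))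
  have ht0 : 0 ≤ t := by linarith
  have hK1 := norm_K1hat_sub_J1hat_le hA.le hγ ht0 hξ hξγ
  have hK2 := abs_K2hat_sub_J2hat_le hA.le hγ ht0 hξ hξγ
  have hdecay := mul_add_mul_exp_neg_two_mul_le (a := (α + β) / 4)
    (p := 5 * (α + β) ^ 2 / (4 * γ)) (q := (α + β) / γ) (x := ‖ξ‖ ^ 2 * t)
    (by positivity) (by positivity) (by positivity) (by positivity)
  calc _ ≤ (5 * (α + β) ^ 2 / (4 * γ) * (‖ξ‖ ^ 2 * t) + (α + β) / γ)
        * exp (-(2 * ((α + β) / 4) * (‖ξ‖ ^ 2 * t))) :=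
        (add_le_add hK1 hK2).trans_eq (by ring_nf)
    _ ≤ _ := hdecay
    _ = _ := by
        rw [← mul_assoc]
        congr 1
        field_simp
        ring

end
end

section
/- Fix constants α > 0, γ > 0, β ≥ 0. There exist ε₀ ∈ (0, min(1, 2γ/(α+β))), c > 0 and C > 0 such that for all a ∈ ℂ, b ∈ ℂⁿ, all ξ ∈ ℝⁿ with 0 < |ξ| ≤ ε₀, and all t ≥ 1: |ρ̂(t,ξ) − e^{−((α+β)/2)|ξ|²t}a − Ĵ₀(t,ξ)|ξ|a − Ĵ₁(t,ξ)·(|ξ|b)| ≤ C e^{−c|ξ|²t}·|ξ|·(|a| + |b|), where ρ̂ is the Fourier-space solution with data (a,b). -/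
open MeasureTheory Filter
open scoped ENNReal Topology

noncomputable section

/-! For `0 < |ξ| < 2γ/(α+β)` the characteristic roots are `λ± = -(α+β)|ξ|²/2 ± i m` with
`m = |ξ| √(γ² - (α+β)²|ξ|²/4)`, so `ρ̂` is `e^{-(α+β)|ξ|²t/2}` times trigonometric functions of
`m t`, and the expansion is obtained by replacing `m` with `γ|ξ|`. Since
`0 ≤ γ|ξ| - m ≤ (α+β)²|ξ|³/(4γ)`, the phase error at time `t` is `O(|ξ|³ t)`, and the extra
factor `|ξ|² t` is absorbed by halving the decay rate: `s e^{-cs} ≤ (2/c) e^{-cs/2}`. -/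

open Complex in
lemma Complex.ofReal_cpow_one_half_of_nonpos {x : ℝ} (hx : x ≤ 0) :
    (x : ℂ) ^ (1 / 2 : ℂ) = I * Real.sqrt (-x) := by
  rw [ofReal_cpow_of_nonpos hx, ← ofReal_neg, Real.sqrt_eq_rpow, ofReal_cpow (neg_nonneg.2 hx),
    show Real.pi * I * (1 / 2) = Real.pi / 2 * I by ring, exp_pi_div_two_mul_I]
  push_cast
  ring

section CharacteristicRoots

variable {α β γ r : ℝ}

lemma mul_sqrt_neg_discr_eq_lamI (hK : 0 < α + β) (hr : 0 ≤ r) :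
    (α + β) / 2 * Real.sqrt (-(r ^ 4 - 4 * γ ^ 2 / (α + β) ^ 2 * r ^ 2)) = lamI α β γ r := by
  calc (α + β) / 2 * Real.sqrt (-(r ^ 4 - 4 * γ ^ 2 / (α + β) ^ 2 * r ^ 2))
      = Real.sqrt (((α + β) / 2) ^ 2 * -(r ^ 4 - 4 * γ ^ 2 / (α + β) ^ 2 * r ^ 2)) := by
        rw [Real.sqrt_mul (by positivity), Real.sqrt_sq (by positivity)]
    _ = Real.sqrt (r ^ 2 * (γ ^ 2 - (α + β) ^ 2 / 4 * r ^ 2)) := by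
        congr 1
        field_simp
        ring
    _ = lamI α β γ r := by rw [Real.sqrt_mul (sq_nonneg r), Real.sqrt_sq hr, lamI]

lemma discr_nonpos (hr : 0 ≤ r) (hr' : r ≤ 2 * γ / (α + β)) :
    r ^ 4 - 4 * γ ^ 2 / (α + β) ^ 2 * r ^ 2 ≤ 0 := by
  have h : r ^ 2 ≤ 4 * γ ^ 2 / (α + β) ^ 2 := by
    have h2 := pow_le_pow_left₀ hr hr' 2
    rwa [div_pow, mul_pow, show (2 : ℝ) ^ 2 = 4 by norm_num] at h2
  have hfac : r ^ 4 - 4 * γ ^ 2 / (α + β) ^ 2 * r ^ 2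
      = r ^ 2 * (r ^ 2 - 4 * γ ^ 2 / (α + β) ^ 2) := by ring
  rw [hfac]
  exact mul_nonpos_of_nonneg_of_nonpos (sq_nonneg r) (by linarith)

lemma lamP_eq (hK : 0 < α + β) (hr : 0 ≤ r) (hr' : r ≤ 2 * γ / (α + β)) :
    lamP α β γ r = lamR α β r + lamI α β γ r * Complex.I := by
  rw [lamP, Complex.ofReal_cpow_one_half_of_nonpos (discr_nonpos hr hr'),
    ← mul_sqrt_neg_discr_eq_lamI hK hr, lamR]
  push_cast
  ring

lemma lamM_eq (hK : 0 < α + β) (hr : 0 ≤ r) (hr' : r ≤ 2 * γ / (α + β)) :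
    lamM α β γ r = lamR α β r - lamI α β γ r * Complex.I := by
  rw [lamM, Complex.ofReal_cpow_one_half_of_nonpos (discr_nonpos hr hr'),
    ← mul_sqrt_neg_discr_eq_lamI hK hr, lamR]
  push_cast
  ring

lemma lamI_pos (hK : 0 < α + β) (hr : 0 < r) (hr' : r < 2 * γ / (α + β)) :
    0 < lamI α β γ r := by
  have h : r * (α + β) < 2 * γ := (lt_div_iff₀ hK).1 hr'
  refine mul_pos hr (Real.sqrt_pos.2 ?_)
  nlinarith [mul_pos hr hK]

lemma lamI_le (hγ : 0 ≤ γ) (hr : 0 ≤ r) : lamI α β γ r ≤ γ * r := by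
  rw [lamI, mul_comm γ]
  refine mul_le_mul_of_nonneg_left ?_ hr
  exact Real.sqrt_le_iff.2 ⟨hγ, by nlinarith [sq_nonneg ((α + β) * r)]⟩

lemma half_mul_le_lamI (hK : 0 ≤ α + β) (hγ : 0 ≤ γ) (hr : 0 ≤ r) (hKr : (α + β) * r ≤ γ) :
    γ / 2 * r ≤ lamI α β γ r := by
  rw [lamI, mul_comm (γ / 2)]
  refine mul_le_mul_of_nonneg_left (Real.le_sqrt_of_sq_le ?_) hr
  nlinarith [mul_nonneg hK hr]

lemma mul_sub_lamI_le (hγ : 0 < γ) (hr : 0 ≤ r) :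
    γ * r - lamI α β γ r ≤ (α + β) ^ 2 / (4 * γ) * r ^ 3 := by
  set u := (α + β) ^ 2 / 4 * r ^ 2
  have hs : γ - Real.sqrt (γ ^ 2 - u) ≤ u / γ := by
    rw [le_div_iff₀ hγ]
    rcases le_total u (γ ^ 2) with h | h
    · have hsq := Real.sq_sqrt (sub_nonneg.2 h)
      nlinarith [Real.sqrt_le_sqrt (sub_le_self (γ ^ 2) (by positivity : 0 ≤ u)),
        Real.sqrt_sq hγ.le, Real.sqrt_nonneg (γ ^ 2 - u)]
    · nlinarith [Real.sqrt_nonneg (γ ^ 2 - u)]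
  calc γ * r - lamI α β γ r = r * (γ - Real.sqrt (γ ^ 2 - u)) := by rw [lamI]; ring
    _ ≤ r * (u / γ) := mul_le_mul_of_nonneg_left hs hr
    _ = (α + β) ^ 2 / (4 * γ) * r ^ 3 := by field_simp; ring

lemma exp_lamP_mul (hK : 0 < α + β) (hr : 0 ≤ r) (hr' : r ≤ 2 * γ / (α + β)) (t : ℝ) :
    Complex.exp (lamP α β γ r * t) = Real.exp (lamR α β r * t) *
      (Real.cos (lamI α β γ r * t) + Real.sin (lamI α β γ r * t) * Complex.I) := by
  rw [lamP_eq hK hr hr', add_mul, mul_right_comm, ← Complex.ofReal_mul, ← Complex.ofReal_mul,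
    Complex.exp_add_mul_I, Complex.ofReal_exp, Complex.ofReal_cos, Complex.ofReal_sin]

lemma exp_lamM_mul (hK : 0 < α + β) (hr : 0 ≤ r) (hr' : r ≤ 2 * γ / (α + β)) (t : ℝ) :
    Complex.exp (lamM α β γ r * t) = Real.exp (lamR α β r * t) *
      (Real.cos (lamI α β γ r * t) - Real.sin (lamI α β γ r * t) * Complex.I) := by
  rw [lamM_eq hK hr hr', sub_mul, mul_right_comm, ← Complex.ofReal_mul, ← Complex.ofReal_mul,
    sub_eq_add_neg, ← neg_mul, Complex.exp_add_mul_I, Complex.cos_neg, Complex.sin_neg,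
    Complex.ofReal_exp, Complex.ofReal_cos, Complex.ofReal_sin, neg_mul, ← sub_eq_add_neg]

end CharacteristicRoots

lemma rhoHat_sub_expansion {α β γ : ℝ} {n : ℕ} (hK : 0 < α + β) (a : ℂ)
    (b : EuclideanSpace ℂ (Fin n)) {ξ : EuclideanSpace ℝ (Fin n)} (hξ : 0 < ‖ξ‖)
    (hξ' : ‖ξ‖ < 2 * γ / (α + β)) (t : ℝ) :
    rhoHat α β γ a b ξ t - Complex.exp (Complex.ofReal (-((α+β)/2 * ‖ξ‖^2 * t))) * a
        - Complex.ofReal (J0hat α β γ t ‖ξ‖) * (‖ξ‖ : ℂ) * a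
        - ∑ k, J1hat α β γ t ξ k * ((‖ξ‖ : ℂ) * b k)
      = Real.exp (-((α + β) / 2 * ‖ξ‖ ^ 2 * t)) *
        ((Real.cos (lamI α β γ ‖ξ‖ * t) - Real.cos (γ * ‖ξ‖ * t)
            - lamR α β ‖ξ‖ / lamI α β γ ‖ξ‖ * Real.sin (lamI α β γ ‖ξ‖ * t) : ℝ) * a
          - Complex.I * (γ * (Real.sin (lamI α β γ ‖ξ‖ * t) / lamI α β γ ‖ξ‖
            - Real.sin (γ * ‖ξ‖ * t) / (γ * ‖ξ‖)) : ℝ) * ∑ k, (ξ k : ℂ) * b k) := by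
  have hγ : 0 < γ := by
    have := hξ.trans hξ'
    rw [lt_div_iff₀ hK] at this
    linarith
  have hm := (lamI_pos hK hξ hξ').ne'
  have hJ1 : ∑ k, J1hat α β γ t ξ k * ((‖ξ‖ : ℂ) * b k)
      = -Complex.I * (Real.exp (-((α + β) / 2 * ‖ξ‖ ^ 2 * t)) * Real.sin (γ * ‖ξ‖ * t) / ‖ξ‖ : ℝ)
        * ∑ k, (ξ k : ℂ) * b k := by
    rw [Finset.mul_sum]
    refine Finset.sum_congr rfl fun k _ => ?_
    rw [J1hat]
    push_cast
    field_simp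
  rw [hJ1, rhoHat, exp_lamP_mul hK hξ.le hξ'.le, exp_lamM_mul hK hξ.le hξ'.le,
    lamP_eq hK hξ.le hξ'.le, lamM_eq hK hξ.le hξ'.le, J0hat, lamR]
  have : (lamI α β γ ‖ξ‖ : ℂ) ≠ 0 := by exact_mod_cast hm
  have : (‖ξ‖ : ℂ) ≠ 0 := by exact_mod_cast hξ.ne'
  have : (γ : ℂ) ≠ 0 := by exact_mod_cast hγ.ne'
  push_cast
  field_simp
  ring

lemma mul_exp_neg_mul_le {c : ℝ} (hc : 0 < c) (s : ℝ) :
    s * Real.exp (-(c * s)) ≤ 2 / c * Real.exp (-(c / 2 * s)) := by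
  have hy : c / 2 * s * Real.exp (-(c / 2 * s)) ≤ 1 :=
    (Real.mul_exp_neg_le_exp_neg_one _).trans (Real.exp_le_one_iff.2 (by norm_num))
  have hsplit : Real.exp (-(c * s)) = Real.exp (-(c / 2 * s)) * Real.exp (-(c / 2 * s)) := by
    rw [← Real.exp_add]; ring_nf
  calc s * Real.exp (-(c * s))
      = 2 / c * (c / 2 * s * Real.exp (-(c / 2 * s))) * Real.exp (-(c / 2 * s)) := by
        rw [hsplit]; field_simp
    _ ≤ 2 / c * 1 * Real.exp (-(c / 2 * s)) := by gcongr
    _ = 2 / c * Real.exp (-(c / 2 * s)) := by ring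

section RemainderBounds

variable {α β γ r t : ℝ}

lemma exp_mul_phase_drift_le (hK : 0 < α + β) (hγ : 0 < γ) (hr : 0 ≤ r) (ht : 0 ≤ t) :
    Real.exp (-((α + β) / 2 * r ^ 2 * t)) * ((γ * r - lamI α β γ r) * t)
      ≤ (α + β) / γ * r * Real.exp (-((α + β) / 4 * r ^ 2 * t)) := by
  have hdecay := mul_exp_neg_mul_le (c := (α + β) / 2) (by positivity) (r ^ 2 * t)
  calc Real.exp (-((α + β) / 2 * r ^ 2 * t)) * ((γ * r - lamI α β γ r) * t)
      ≤ Real.exp (-((α + β) / 2 * r ^ 2 * t)) * ((α + β) ^ 2 / (4 * γ) * r ^ 3 * t) := by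
        gcongr
        exact mul_sub_lamI_le hγ hr
    _ = (α + β) ^ 2 / (4 * γ) * r * (r ^ 2 * t * Real.exp (-((α + β) / 2 * (r ^ 2 * t)))) := by
        ring_nf
    _ ≤ (α + β) ^ 2 / (4 * γ) * r
          * (2 / ((α + β) / 2) * Real.exp (-((α + β) / 2 / 2 * (r ^ 2 * t)))) :=
        mul_le_mul_of_nonneg_left hdecay (by positivity)
    _ = (α + β) / γ * r * Real.exp (-((α + β) / 4 * r ^ 2 * t)) := by
        field_simp
        ring_nf

lemma exp_le_exp_quarter (hK : 0 < α + β) (ht : 0 ≤ t) :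
    Real.exp (-((α + β) / 2 * r ^ 2 * t)) ≤ Real.exp (-((α + β) / 4 * r ^ 2 * t)) :=
  Real.exp_le_exp.2 (by nlinarith [mul_nonneg (mul_nonneg hK.le (sq_nonneg r)) ht])

lemma exp_mul_abs_cos_remainder_le (hK : 0 < α + β) (hγ : 0 < γ) (hr : 0 < r)
    (hKr : (α + β) * r ≤ γ) (ht : 0 ≤ t) :
    Real.exp (-((α + β) / 2 * r ^ 2 * t)) * |Real.cos (lamI α β γ r * t) - Real.cos (γ * r * t)
        - lamR α β r / lamI α β γ r * Real.sin (lamI α β γ r * t)|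
      ≤ 2 * ((α + β) / γ) * r * Real.exp (-((α + β) / 4 * r ^ 2 * t)) := by
  set m := lamI α β γ r
  set E := Real.exp (-((α + β) / 2 * r ^ 2 * t))
  have hE : E ≤ Real.exp (-((α + β) / 4 * r ^ 2 * t)) := exp_le_exp_quarter hK ht
  have hm : γ / 2 * r ≤ m := half_mul_le_lamI hK.le hγ.le hr.le hKr
  have hm0 : 0 < m := lt_of_lt_of_le (by positivity) hm
  have hcos : |Real.cos (m * t) - Real.cos (γ * r * t)| ≤ (γ * r - m) * t := by
    refine (Real.abs_cos_sub_cos_le _ _).trans_eq ?_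
    rw [abs_sub_comm, ← sub_mul, abs_of_nonneg (mul_nonneg (sub_nonneg.2 (lamI_le hγ.le hr.le)) ht)]
  have hratio : |lamR α β r / m * Real.sin (m * t)| ≤ (α + β) / γ * r := by
    rw [abs_mul, lamR, abs_div, abs_neg, abs_of_pos hm0, abs_of_nonneg (by positivity)]
    calc (α + β) / 2 * r ^ 2 / m * |Real.sin (m * t)| ≤ (α + β) / 2 * r ^ 2 / (γ / 2 * r) * 1 := by
          gcongr
          exact Real.abs_sin_le_one _
      _ = (α + β) / γ * r := by field_simp
  calc E * |Real.cos (m * t) - Real.cos (γ * r * t) - lamR α β r / m * Real.sin (m * t)|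
      ≤ E * ((γ * r - m) * t + (α + β) / γ * r) := by
        gcongr
        exact (abs_sub _ _).trans (add_le_add hcos hratio)
    _ = E * ((γ * r - m) * t) + (α + β) / γ * r * E := by ring
    _ ≤ (α + β) / γ * r * Real.exp (-((α + β) / 4 * r ^ 2 * t))
        + (α + β) / γ * r * Real.exp (-((α + β) / 4 * r ^ 2 * t)) := by
        grw [exp_mul_phase_drift_le hK hγ hr.le ht, hE]
    _ = 2 * ((α + β) / γ) * r * Real.exp (-((α + β) / 4 * r ^ 2 * t)) := by ring

lemma exp_mul_abs_sin_remainder_le (hK : 0 < α + β) (hγ : 0 < γ) (hr : 0 < r)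
    (hKr : (α + β) * r ≤ γ) (ht : 0 ≤ t) :
    Real.exp (-((α + β) / 2 * r ^ 2 * t)) * |γ * (Real.sin (lamI α β γ r * t) / lamI α β γ r
        - Real.sin (γ * r * t) / (γ * r))|
      ≤ 2 * ((α + β) / γ) * Real.exp (-((α + β) / 4 * r ^ 2 * t)) := by
  set m := lamI α β γ r
  set E := Real.exp (-((α + β) / 2 * r ^ 2 * t))
  have hE : E ≤ Real.exp (-((α + β) / 4 * r ^ 2 * t)) := exp_le_exp_quarter hK ht
  have hm : γ / 2 * r ≤ m := half_mul_le_lamI hK.le hγ.le hr.le hKr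
  have hm0 : 0 < m := lt_of_lt_of_le (by positivity) hm
  have hdrift : 0 ≤ γ * r - m := sub_nonneg.2 (lamI_le hγ.le hr.le)
  have hsplit : γ * (Real.sin (m * t) / m - Real.sin (γ * r * t) / (γ * r))
      = Real.sin (m * t) * ((γ * r - m) / (m * r))
        + (Real.sin (m * t) - Real.sin (γ * r * t)) / r := by
    field_simp
    ring
  have hfreq : |Real.sin (m * t) * ((γ * r - m) / (m * r))| ≤ (α + β) / (2 * γ) := by
    rw [abs_mul, abs_of_nonneg (by positivity : 0 ≤ (γ * r - m) / (m * r))]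
    calc |Real.sin (m * t)| * ((γ * r - m) / (m * r))
        ≤ 1 * ((α + β) ^ 2 / (4 * γ) * r ^ 3 / (γ / 2 * r * r)) := by
          gcongr
          · exact Real.abs_sin_le_one _
          · exact mul_sub_lamI_le hγ hr.le
      _ = (α + β) / (2 * γ) * ((α + β) * r / γ) := by field_simp; ring
      _ ≤ (α + β) / (2 * γ) * 1 := by
          gcongr
          exact (div_le_one hγ).2 hKr
      _ = (α + β) / (2 * γ) := mul_one _
  have hphase : |(Real.sin (m * t) - Real.sin (γ * r * t)) / r| ≤ (γ * r - m) * t / r := by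
    rw [abs_div, abs_of_pos hr]
    gcongr
    refine (Real.abs_sin_sub_sin_le _ _).trans_eq ?_
    rw [abs_sub_comm, ← sub_mul, abs_of_nonneg (mul_nonneg hdrift ht)]
  calc E * |γ * (Real.sin (m * t) / m - Real.sin (γ * r * t) / (γ * r))|
      ≤ E * ((α + β) / (2 * γ) + (γ * r - m) * t / r) := by
        rw [hsplit]
        gcongr
        exact (abs_add_le _ _).trans (add_le_add hfreq hphase)
    _ = (α + β) / (2 * γ) * E + E * ((γ * r - m) * t) / r := by ring
    _ ≤ (α + β) / (2 * γ) * Real.exp (-((α + β) / 4 * r ^ 2 * t))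
        + (α + β) / γ * r * Real.exp (-((α + β) / 4 * r ^ 2 * t)) / r := by
        grw [exp_mul_phase_drift_le hK hγ hr.le ht, hE]
    _ ≤ 2 * ((α + β) / γ) * Real.exp (-((α + β) / 4 * r ^ 2 * t)) := by
        rw [mul_div_right_comm, mul_div_cancel_right₀ _ hr.ne']
        have : (α + β) / (2 * γ) ≤ (α + β) / γ := by gcongr; linarith
        nlinarith [Real.exp_pos (-((α + β) / 4 * r ^ 2 * t))]

end RemainderBounds

lemma norm_sum_ofReal_mul_le {ι : Type*} [Fintype ι] (ξ : EuclideanSpace ℝ ι)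
    (b : EuclideanSpace ℂ ι) : ‖∑ k, (ξ k : ℂ) * b k‖ ≤ ‖ξ‖ * ‖b‖ := by
  calc ‖∑ k, (ξ k : ℂ) * b k‖ ≤ ∑ k, ‖ξ k‖ * ‖b k‖ :=
        (norm_sum_le _ _).trans_eq (by simp only [norm_mul, Complex.norm_real])
    _ ≤ √(∑ k, ‖ξ k‖ ^ 2) * √(∑ k, ‖b k‖ ^ 2) := Real.sum_mul_le_sqrt_mul_sqrt _ _ _
    _ = ‖ξ‖ * ‖b‖ := by rw [EuclideanSpace.norm_eq, EuclideanSpace.norm_eq]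

lemma norm_ofReal_mul_sub_I_mul_le {E : ℝ} (hE : 0 ≤ E) (A B : ℝ) (a S : ℂ) :
    ‖(E : ℂ) * ((A : ℂ) * a - Complex.I * (B : ℂ) * S)‖ ≤ E * |A| * ‖a‖ + E * |B| * ‖S‖ := by
  grw [norm_mul, norm_sub_le]
  simp only [norm_mul, Complex.norm_real, Complex.norm_I, Real.norm_eq_abs, abs_of_nonneg hE]
  exact le_of_eq (by ring)

/-- Small-frequency asymptotic expansion of the Fourier-space density:
`ρ̂ = e^{-((α+β)/2)|ξ|²t} a + Ĵ₀|ξ|a + Ĵ₁·(|ξ|b) + O(e^{-c|ξ|²t}|ξ|(|a|+|b|))`. -/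
theorem density_small_frequency_expansion
    (α β γ : ℝ) (hα : 0 < α) (hβ : 0 ≤ β) (hγ : 0 < γ) {n : ℕ} :
    ∃ ε₀ c C : ℝ, 0 < ε₀ ∧ ε₀ < min 1 (2*γ/(α+β)) ∧ 0 < c ∧ 0 < C ∧
      ∀ (a : ℂ) (b : EuclideanSpace ℂ (Fin n)),
      ∀ ξ : EuclideanSpace ℝ (Fin n), 0 < ‖ξ‖ → ‖ξ‖ ≤ ε₀ → ∀ t : ℝ, 1 ≤ t →
        ‖rhoHat α β γ a b ξ t - Complex.exp (Complex.ofReal (-((α+β)/2 * ‖ξ‖^2 * t))) * a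
            - Complex.ofReal (J0hat α β γ t ‖ξ‖) * (‖ξ‖ : ℂ) * a
            - ∑ k, J1hat α β γ t ξ k * ((‖ξ‖ : ℂ) * b k)‖
          ≤ C * Real.exp (-(c * ‖ξ‖^2 * t)) * ‖ξ‖ * (‖a‖ + ‖b‖) := by
  have hK : 0 < α + β := by linarith
  have hε : 0 < min 1 (2 * γ / (α + β)) := lt_min one_pos (by positivity)
  refine ⟨min 1 (2 * γ / (α + β)) / 2, (α + β) / 4, 2 * ((α + β) / γ), by linarith, by linarith,
    by positivity, by positivity, fun a b ξ hξ hξε t ht => ?_⟩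
  have hξK : (α + β) * ‖ξ‖ ≤ γ := by
    rw [← le_div_iff₀' hK]
    linarith [min_le_right 1 (2 * γ / (α + β)), mul_div_assoc 2 γ (α + β)]
  have hξK' : ‖ξ‖ < 2 * γ / (α + β) := by
    rw [lt_div_iff₀' hK]
    linarith [mul_pos hK hξ]
  have ht0 : 0 ≤ t := by linarith
  rw [rhoHat_sub_expansion hK a b hξ hξK' t]
  grw [norm_ofReal_mul_sub_I_mul_le (Real.exp_nonneg _),
    exp_mul_abs_cos_remainder_le hK hγ hξ hξK ht0, exp_mul_abs_sin_remainder_le hK hγ hξ hξK ht0,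
    norm_sum_ofReal_mul_le]
  exact le_of_eq (by ring)

end
end

section
/- Let n ≥ 1, γ > 0 and δ > 0. Then lim_{t→∞} t^{n/2} ∫₀^∞ sin²(γrt) r^{n−1} e^{−δr²t} dr = (1/2)∫₀^∞ s^{n−1} e^{−δs²} ds, and lim_{t→∞} t^{n/2} ∫₀^∞ cos²(γrt) r^{n−1} e^{−δr²t} dr = (1/2)∫₀^∞ s^{n−1} e^{−δs²} ds. In particular, there exist c > 0 and T ≥ 1 such that each of these integrals is at least c·t^{−n/2} for all t ≥ T. -/
open MeasureTheory Filter
open scoped ENNReal Topology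

noncomputable section

/-!
The substitution `r = s / √t` turns `t^{n/2} ∫₀^∞ φ(γrt) r^{n-1} e^{-δr²t} dr` into
`∫₀^∞ φ(γ√t s) s^{n-1} e^{-δs²} ds`, so only the frequency `γ√t → ∞` depends on `t`.
Since `sin² x = (1 - cos 2x) / 2` and `cos² = 1 - sin²`, the oscillating part is a cosine transform
of the integrable weight `s^{n-1} e^{-δs²}`, which vanishes at infinity by the Riemann–Lebesgue
lemma. Both limits are therefore half the (positive) integral of the weight, and the lower bounds
hold with `c` a quarter of it.
-/

open Set Real
open scoped FourierTransform

theorem tendsto_integral_cos_mul_atTop {h : ℝ → ℝ} (hh : Integrable h) :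
    Tendsto (fun u : ℝ => ∫ x, cos (u * x) * h x) atTop (𝓝 0) := by
  -- `∫ cos (u x) h x` is the real part of the Fourier transform of `h` at `u / 2π`.
  have hscale : Tendsto (fun u : ℝ => u / (2 * π)) atTop (cocompact ℝ) :=
    (tendsto_id.atTop_div_const (by positivity)).mono_right atTop_le_cocompact
  have hRL := (Complex.continuous_re.tendsto 0).comp
    ((Real.tendsto_integral_exp_smul_cocompact fun x => (h x : ℂ)).comp hscale)
  simp only [Function.comp_def, Circle.smul_def, smul_eq_mul, Complex.zero_re] at hRL
  refine hRL.congr fun u => ?_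
  have hint : Integrable (fun v : ℝ => (𝐞 (-(v * (u / (2 * π)))) : ℂ) * (h v : ℂ)) :=
    hh.ofReal.bdd_mul (c := 1) (by fun_prop) (.of_forall fun v => (Circle.norm_coe _).le)
  rw [← RCLike.re_to_complex, ← integral_re hint]
  congr 1 with v
  have harg : 2 * π * -(v * (u / (2 * π))) = -(u * v) := by field_simp
  rw [RCLike.re_to_complex, Complex.re_mul_ofReal, Real.fourierChar_apply, harg,
    Complex.exp_ofReal_mul_I_re, cos_neg]

section Oscillation

variable {g : ℝ → ℝ} {s : Set ℝ}

theorem tendsto_setIntegral_cos_mul_atTop (hs : MeasurableSet s) (hg : IntegrableOn g s) :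
    Tendsto (fun u : ℝ => ∫ x in s, cos (u * x) * g x) atTop (𝓝 0) := by
  simpa only [← integral_indicator hs, indicator_mul_right] using
    tendsto_integral_cos_mul_atTop (hg.integrable_indicator hs)

theorem integrableOn_cos_mul (hg : IntegrableOn g s) (u : ℝ) :
    IntegrableOn (fun x => cos (u * x) * g x) s :=
  Integrable.bdd_mul (c := 1) hg (by fun_prop) (.of_forall fun _ => abs_cos_le_one _)

theorem integrableOn_sin_sq_mul (hg : IntegrableOn g s) (u : ℝ) :
    IntegrableOn (fun x => sin (u * x) ^ 2 * g x) s :=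
  Integrable.bdd_mul (c := 1) hg (by fun_prop) (.of_forall fun _ => by
    simp [abs_sin_le_one])

theorem tendsto_setIntegral_sin_sq_mul_atTop (hs : MeasurableSet s) (hg : IntegrableOn g s) :
    Tendsto (fun u : ℝ => ∫ x in s, sin (u * x) ^ 2 * g x) atTop
      (𝓝 ((1 / 2) * ∫ x in s, g x)) := by
  have hsplit : ∀ u : ℝ, ∫ x in s, sin (u * x) ^ 2 * g x
      = (1 / 2) * (∫ x in s, g x) - (1 / 2) * ∫ x in s, cos ((2 * u) * x) * g x := by
    intro u
    rw [← integral_const_mul, ← integral_const_mul,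
      ← integral_sub (hg.const_mul _) ((integrableOn_cos_mul hg _).const_mul _)]
    congr with x
    rw [sin_sq_eq_half_sub]
    ring_nf
  have hlim := (tendsto_const_nhds (x := (1 / 2) * ∫ x in s, g x)).sub
    (((tendsto_setIntegral_cos_mul_atTop hs hg).comp
      (tendsto_id.const_mul_atTop two_pos)).const_mul (1 / 2))
  rw [mul_zero, sub_zero] at hlim
  exact hlim.congr fun u => (hsplit u).symm

theorem tendsto_setIntegral_cos_sq_mul_atTop (hs : MeasurableSet s) (hg : IntegrableOn g s) :
    Tendsto (fun u : ℝ => ∫ x in s, cos (u * x) ^ 2 * g x) atTop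
      (𝓝 ((1 / 2) * ∫ x in s, g x)) := by
  have hsplit : ∀ u : ℝ, ∫ x in s, cos (u * x) ^ 2 * g x
      = (∫ x in s, g x) - ∫ x in s, sin (u * x) ^ 2 * g x := by
    intro u
    rw [← integral_sub hg (integrableOn_sin_sq_mul hg u)]
    congr with x
    rw [cos_sq']
    ring
  have hlim := (tendsto_const_nhds (x := ∫ x in s, g x)).sub
    (tendsto_setIntegral_sin_sq_mul_atTop hs hg)
  rw [show ∀ I : ℝ, I - 1 / 2 * I = 1 / 2 * I by intro I; ring] at hlim
  exact hlim.congr fun u => (hsplit u).symm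

end Oscillation

theorem integral_Ioi_pow_mul_comp_mul_right (G : ℝ → ℝ) (k : ℕ) {c : ℝ} (hc : 0 < c) :
    c ^ (k + 1) * ∫ r in Ioi 0, r ^ k * G (r * c) = ∫ s in Ioi 0, s ^ k * G s := by
  calc c ^ (k + 1) * ∫ r in Ioi 0, r ^ k * G (r * c)
      = c * ∫ r in Ioi 0, (r * c) ^ k * G (r * c) := by
        rw [← integral_const_mul, ← integral_const_mul]
        congr with r
        ring
    _ = ∫ s in Ioi 0, s ^ k * G s := by
        rw [integral_comp_mul_right_Ioi (fun s => s ^ k * G s) 0 hc, zero_mul, smul_eq_mul,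
          mul_inv_cancel_left₀ hc.ne']

theorem rpow_half_mul_integral_radial_eq (φ : ℝ → ℝ) {n : ℕ} (hn : 1 ≤ n) (γ δ : ℝ) {t : ℝ}
    (ht : 0 < t) :
    t ^ ((n : ℝ) / 2) * ∫ r in Ioi 0, φ (γ * r * t) * r ^ (n - 1) * exp (-(δ * r ^ 2 * t))
      = ∫ s in Ioi 0, φ (γ * √t * s) * (s ^ (n - 1) * exp (-(δ * s ^ 2))) := by
  obtain ⟨k, rfl⟩ : ∃ k, n = k + 1 := ⟨n - 1, by omega⟩
  have hsqrt : √t * √t = t := mul_self_sqrt ht.le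
  have hpow : t ^ (((k + 1 : ℕ) : ℝ) / 2) = √t ^ (k + 1) := by
    rw [sqrt_eq_rpow, ← rpow_natCast, ← rpow_mul ht.le]
    ring_nf
  calc t ^ (((k + 1 : ℕ) : ℝ) / 2) *
        ∫ r in Ioi 0, φ (γ * r * t) * r ^ (k + 1 - 1) * exp (-(δ * r ^ 2 * t))
      = √t ^ (k + 1) * ∫ r in Ioi 0,
          r ^ k * (φ (γ * √t * (r * √t)) * exp (-(δ * (r * √t) ^ 2))) := by
        rw [hpow, Nat.add_sub_cancel]
        congr with r
        rw [show γ * √t * (r * √t) = γ * r * t by linear_combination γ * r * hsqrt,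
          show δ * (r * √t) ^ 2 = δ * r ^ 2 * t by linear_combination δ * r ^ 2 * hsqrt]
        ring
    _ = ∫ s in Ioi 0, s ^ k * (φ (γ * √t * s) * exp (-(δ * s ^ 2))) :=
        integral_Ioi_pow_mul_comp_mul_right
          (fun s => φ (γ * √t * s) * exp (-(δ * s ^ 2))) k (sqrt_pos.2 ht)
    _ = ∫ s in Ioi 0, φ (γ * √t * s) * (s ^ (k + 1 - 1) * exp (-(δ * s ^ 2))) := by
        rw [Nat.add_sub_cancel]
        congr with s
        ring

theorem integrableOn_pow_mul_exp_neg_mul_sq {b : ℝ} (hb : 0 < b) (k : ℕ) :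
    IntegrableOn (fun x : ℝ => x ^ k * exp (-(b * x ^ 2))) (Ioi 0) := by
  simpa [rpow_natCast, neg_mul] using
    integrableOn_rpow_mul_exp_neg_mul_sq hb (s := k) (by linarith [k.cast_nonneg (α := ℝ)])

theorem integral_pow_mul_exp_neg_mul_sq_pos {b : ℝ} (hb : 0 < b) (k : ℕ) :
    0 < ∫ x in Ioi 0, x ^ k * exp (-(b * x ^ 2)) := by
  have hpos : ∀ x ∈ Ioi (0 : ℝ), 0 < x ^ k * exp (-(b * x ^ 2)) := fun x hx => by
    have : 0 < x := hx
    positivity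
  rw [setIntegral_pos_iff_support_of_nonneg_ae
      ((ae_restrict_mem measurableSet_Ioi).mono fun x hx => (hpos x hx).le)
      (integrableOn_pow_mul_exp_neg_mul_sq hb k),
    inter_eq_right.2 (show Ioi (0 : ℝ) ⊆ Function.support _ from fun x hx => (hpos x hx).ne')]
  simp

theorem eventually_mul_rpow_neg_le_of_tendsto {F : ℝ → ℝ} {a L c : ℝ}
    (hF : Tendsto (fun t => t ^ a * F t) atTop (𝓝 L)) (hc : c < L) :
    ∀ᶠ t in atTop, c * t ^ (-a) ≤ F t := by
  filter_upwards [hF.eventually_const_le hc, eventually_gt_atTop 0] with t hle ht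
  rw [rpow_neg ht.le, ← div_eq_mul_inv, div_le_iff₀ (rpow_pos_of_pos ht a)]
  linarith

/-- Large-time asymptotics of the oscillatory Gaussian radial integrals:
`t^{n/2} ∫₀^∞ sin²(γrt) rⁿ⁻¹ e^{-δr²t} dr → (1/2)∫₀^∞ sⁿ⁻¹ e^{-δs²} ds`, likewise for `cos²`,
and in particular both integrals are bounded below by `c t^{-n/2}` for large times. -/
theorem radial_oscillatory_integral_asymptotics
    {n : ℕ} (hn : 1 ≤ n) (γ δ : ℝ) (hγ : 0 < γ) (hδ : 0 < δ) :
    Filter.Tendsto (fun t : ℝ => t ^ ((n:ℝ)/2) * ∫ r in Set.Ioi (0:ℝ),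
        Real.sin (γ*r*t)^2 * r^(n-1) * Real.exp (-(δ*r^2*t)))
      Filter.atTop (nhds ((1/2) * ∫ s in Set.Ioi (0:ℝ), s^(n-1) * Real.exp (-(δ*s^2))))
    ∧ Filter.Tendsto (fun t : ℝ => t ^ ((n:ℝ)/2) * ∫ r in Set.Ioi (0:ℝ),
        Real.cos (γ*r*t)^2 * r^(n-1) * Real.exp (-(δ*r^2*t)))
      Filter.atTop (nhds ((1/2) * ∫ s in Set.Ioi (0:ℝ), s^(n-1) * Real.exp (-(δ*s^2))))
    ∧ ∃ c T : ℝ, 0 < c ∧ 1 ≤ T ∧ ∀ t, T ≤ t →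
        c * t ^ (-(n:ℝ)/2) ≤ (∫ r in Set.Ioi (0:ℝ),
            Real.sin (γ*r*t)^2 * r^(n-1) * Real.exp (-(δ*r^2*t)))
        ∧ c * t ^ (-(n:ℝ)/2) ≤ (∫ r in Set.Ioi (0:ℝ),
            Real.cos (γ*r*t)^2 * r^(n-1) * Real.exp (-(δ*r^2*t))) := by
  have hg := integrableOn_pow_mul_exp_neg_mul_sq hδ (n - 1)
  have hfreq : Tendsto (fun t : ℝ => γ * √t) atTop atTop :=
    tendsto_sqrt_atTop.const_mul_atTop hγ
  have hsin := ((tendsto_setIntegral_sin_sq_mul_atTop measurableSet_Ioi hg).comp hfreq).congr' <|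
    (eventually_gt_atTop 0).mono fun t ht =>
      (rpow_half_mul_integral_radial_eq (fun x => sin x ^ 2) hn γ δ ht).symm
  have hcos := ((tendsto_setIntegral_cos_sq_mul_atTop measurableSet_Ioi hg).comp hfreq).congr' <|
    (eventually_gt_atTop 0).mono fun t ht =>
      (rpow_half_mul_integral_radial_eq (fun x => cos x ^ 2) hn γ δ ht).symm
  have hL : 0 < (1 / 2) * ∫ s in Ioi (0 : ℝ), s ^ (n - 1) * exp (-(δ * s ^ 2)) :=
    mul_pos one_half_pos (integral_pow_mul_exp_neg_mul_sq_pos hδ (n - 1))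
  obtain ⟨T, hT⟩ := ((eventually_mul_rpow_neg_le_of_tendsto hsin (half_lt_self hL)).and
    ((eventually_mul_rpow_neg_le_of_tendsto hcos (half_lt_self hL)).and
      (eventually_ge_atTop 1))).exists_forall_of_atTop
  refine ⟨hsin, hcos, _, T, half_pos hL, (hT T le_rfl).2.2, fun t ht => ?_⟩
  rw [neg_div]
  exact ⟨(hT t ht).1, (hT t ht).2.1⟩

end
end
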